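/- Let d : ℕ and s ∈ ℝ. On MvPolynomial (Fin d) ℝ, conjugating the Euler operator by the heat operator gives the number operator: for every polynomial p, e^{-sΔ/2}(D(e^{sΔ/2} p)) = D p - s • Δ p, where D p = ∑_{i : Fin d} X_i * pderiv i p. -/

import Mathlib

open MvPolynomial

/-- The Laplacian `Δ p = ∑ i, ∂²p/∂x_i²` on polynomials in `d` variables. -/
noncomputable def mvLaplacian {d : ℕ} (p : MvPolynomial (Fin d) ℝ) :
    MvPolynomial (Fin d) ℝ :=
  ∑ i : Fin d, pderiv i (pderiv i p)

/-- The heat operator `e^{tΔ/2} p = ∑_{k ≤ totalDegree p} ((t/2)^k / k!) • Δ^k p`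
(a terminating series, since `Δ` is locally nilpotent). -/
noncomputable def heatOp {d : ℕ} (t : ℝ) (p : MvPolynomial (Fin d) ℝ) :
    MvPolynomial (Fin d) ℝ :=
  ∑ k ∈ Finset.range (p.totalDegree + 1),
    ((t / 2) ^ k / (k.factorial : ℝ)) • (mvLaplacian (d := d))^[k] p

/-- The Euler operator `D p = ∑ i, X_i ∂p/∂x_i` on polynomials in `d` variables. -/
noncomputable def eulerOp {d : ℕ} (p : MvPolynomial (Fin d) ℝ) :
    MvPolynomial (Fin d) ℝ :=
  ∑ i : Fin d, X i * pderiv i p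

/-!
The Laplacian and the Euler operator satisfy `⁅Δ, D⁆ = 2Δ`, hence `⁅Δ^k, D⁆ = 2k Δ^k`, and
summing the exponential series gives `D e^{tΔ} = e^{tΔ} (D - 2tΔ)`. Because `Δ` lowers the degree,
every series involved is a finite sum, and `e^{-tΔ} e^{tΔ} = 1` is the binomial theorem
(a Cauchy product of two exponential series). Put `t = s/2`.
-/

open Finset

lemma sum_range_pow_div_factorial_mul {𝕜 : Type*} [Field 𝕜] [CharZero 𝕜] (s t : 𝕜) (n : ℕ) :
    ∑ k ∈ range (n + 1), s ^ k / k.factorial * (t ^ (n - k) / (n - k).factorial) =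
      (s + t) ^ n / n.factorial := by
  have := congrArg (PowerSeries.coeff n) (PowerSeries.exp_mul_exp_eq_exp_add (A := 𝕜) s t)
  rw [← Nat.sum_antidiagonal_eq_sum_range_succ fun i j ↦
    s ^ i / i.factorial * (t ^ j / j.factorial)]
  simpa [PowerSeries.coeff_mul, div_eq_mul_inv] using this

lemma lie_pow_left_of_lie_eq_smul {R A : Type*} [CommRing R] [Ring A] [Algebra R A] {a b : A}
    {c : R} (h : ⁅a, b⁆ = c • a) (k : ℕ) : ⁅a ^ k, b⁆ = (k * c) • a ^ k := by
  induction k with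
  | zero => simp [Ring.lie_def]
  | succ k ih =>
    rw [Ring.lie_def, sub_eq_iff_eq_add] at h ih ⊢
    rw [pow_succ', mul_assoc, ih, mul_add, ← mul_assoc, h, mul_smul_comm, add_mul, smul_mul_assoc,
      mul_assoc, ← pow_succ']
    push_cast
    module

namespace Module.End

variable {𝕜 M : Type*} [Field 𝕜] [AddCommGroup M] [Module 𝕜 M]

/-- On vectors with `(L ^ N) v = 0` this is the whole series `e^{tL} v`. -/
noncomputable def truncExp (L : Module.End 𝕜 M) (t : 𝕜) (N : ℕ) : Module.End 𝕜 M :=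
  ∑ k ∈ range N, (t ^ k / k.factorial) • L ^ k

variable {L : Module.End 𝕜 M} {v : M} {N : ℕ}

lemma truncExp_apply (t : 𝕜) (N : ℕ) (v : M) :
    L.truncExp t N v = ∑ k ∈ range N, (t ^ k / k.factorial) • (L ^ k) v := by
  simp [truncExp]

lemma truncExp_eq_of_le (t : 𝕜) {N' : ℕ} (hv : (L ^ N) v = 0) (hN : N ≤ N') :
    L.truncExp t N v = L.truncExp t N' v := by
  simp only [truncExp_apply]
  exact sum_subset (range_subset_range.2 hN) fun k _ hk ↦ by
    rw [pow_map_zero_of_le (not_lt.1 (mem_range.not.1 hk)) hv, smul_zero]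

lemma truncExp_congr (t : 𝕜) {N' : ℕ} (hv : (L ^ N) v = 0) (hv' : (L ^ N') v = 0) :
    L.truncExp t N v = L.truncExp t N' v := by
  rcases le_total N N' with hN | hN
  · exact truncExp_eq_of_le t hv hN
  · exact (truncExp_eq_of_le t hv' hN).symm

lemma pow_apply_truncExp (t : 𝕜) (j : ℕ) :
    (L ^ j) (L.truncExp t N v) = L.truncExp t N ((L ^ j) v) := by
  rw [truncExp_apply, truncExp_apply, map_sum]
  refine sum_congr rfl fun k _ ↦ ?_
  rw [map_smul, ← mul_apply, ← mul_apply, ← pow_add, ← pow_add, add_comm]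

lemma truncExp_truncExp [CharZero 𝕜] (s t : 𝕜) (hv : (L ^ N) v = 0) :
    L.truncExp s N (L.truncExp t N v) = L.truncExp (s + t) N v := by
  let f m k := (s ^ m / m.factorial * (t ^ k / k.factorial)) • (L ^ (m + k)) v
  have expand (m : ℕ) (hm : m ∈ range N) :
      (s ^ m / m.factorial) • (L ^ m) (L.truncExp t N v) = ∑ k ∈ range (N - m), f m k := by
    have hLmv : (L ^ (N - m)) ((L ^ m) v) = 0 := by
      rwa [← mul_apply, ← pow_add, Nat.sub_add_cancel (mem_range.1 hm).le]
    rw [pow_apply_truncExp, ← truncExp_eq_of_le t hLmv (Nat.sub_le N m), truncExp_apply, smul_sum]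
    refine sum_congr rfl fun k _ ↦ ?_
    rw [smul_smul, ← mul_apply, ← pow_add, add_comm]
  rw [truncExp_apply, sum_congr rfl expand, ← sum_range_diag_flip, truncExp_apply]
  refine sum_congr rfl fun n _ ↦ ?_
  rw [← sum_range_pow_div_factorial_mul, sum_smul]
  refine sum_congr rfl fun k hk ↦ ?_
  dsimp only [f]
  rw [Nat.add_sub_cancel' (Nat.lt_succ_iff.1 (mem_range.1 hk))]

lemma truncExp_neg_truncExp [CharZero 𝕜] (t : 𝕜) (hv : (L ^ N) v = 0) :
    L.truncExp (-t) N (L.truncExp t N v) = v := by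
  rw [truncExp_truncExp _ _ hv, neg_add_cancel]
  rcases N with _ | N
  · simpa [truncExp] using hv.symm
  · simp [truncExp, sum_range_succ', zero_pow]

lemma smul_truncExp_apply_self [CharZero 𝕜] (t : 𝕜) (hv : (L ^ N) v = 0) :
    t • L.truncExp t N (L v) = ∑ k ∈ range N, (k * (t ^ k / k.factorial)) • (L ^ k) v := by
  have hlast : ((N : 𝕜) * (t ^ N / N.factorial)) • (L ^ N) v = 0 := by rw [hv, smul_zero]
  rw [← add_zero (∑ k ∈ range N, _), ← hlast, ← sum_range_succ, sum_range_succ', truncExp_apply,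
    smul_sum, Nat.cast_zero, zero_mul, zero_smul, add_zero]
  refine sum_congr rfl fun k _ ↦ ?_
  rw [smul_smul, ← mul_apply, ← pow_succ, Nat.factorial_succ]
  congr 1
  push_cast
  field_simp
  ring

variable {E : Module.End 𝕜 M} {c : 𝕜}

lemma pow_apply_eq_zero_of_lie_eq_smul (hLE : ⁅L, E⁆ = c • L) (hv : (L ^ N) v = 0) :
    (L ^ N) (E v) = 0 := by
  have := congr($(lie_pow_left_of_lie_eq_smul hLE N) v)
  rw [Ring.lie_def, LinearMap.sub_apply, mul_apply, mul_apply, hv, map_zero, sub_zero] at this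
  rw [this, LinearMap.smul_apply, hv, smul_zero]

lemma apply_truncExp_of_lie_eq_smul [CharZero 𝕜] (hLE : ⁅L, E⁆ = c • L) (t : 𝕜)
    (hv : (L ^ N) v = 0) :
    E (L.truncExp t N v) = L.truncExp t N (E v - (c * t) • L v) := by
  have hcomm (k : ℕ) : E ((L ^ k) v) = (L ^ k) (E v) - (k * c) • (L ^ k) v := by
    rw [eq_sub_iff_add_eq, ← LinearMap.smul_apply, ← lie_pow_left_of_lie_eq_smul hLE k,
      Ring.lie_def]
    simp
  rw [map_sub, map_smul, mul_smul, smul_truncExp_apply_self t hv, truncExp_apply,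
    truncExp_apply, map_sum, smul_sum, ← sum_sub_distrib]
  refine sum_congr rfl fun k _ ↦ ?_
  rw [map_smul, hcomm, smul_sub, smul_smul, smul_smul]
  congr 2
  ring

theorem truncExp_neg_apply_truncExp_of_lie_eq_smul [CharZero 𝕜] (hLE : ⁅L, E⁆ = c • L) (t : 𝕜)
    {N' : ℕ} (hv : (L ^ N) v = 0) (hw : (L ^ N') (E (L.truncExp t N v)) = 0) :
    L.truncExp (-t) N' (E (L.truncExp t N v)) = E v - (c * t) • L v := by
  have hq : (L ^ N) (E v - (c * t) • L v) = 0 := by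
    rw [map_sub, map_smul, pow_apply_eq_zero_of_lie_eq_smul hLE hv, ← mul_apply, ← pow_succ,
      pow_map_zero_of_le N.le_succ hv, smul_zero, sub_zero]
  rw [apply_truncExp_of_lie_eq_smul hLE t hv] at hw ⊢
  rw [truncExp_congr (-t) hw (by rw [pow_apply_truncExp, hq, map_zero]),
    truncExp_neg_truncExp t hq]

end Module.End

namespace MvPolynomial

variable {σ R : Type*} [CommRing R]

lemma pderiv_pderiv_comm (i j : σ) (p : MvPolynomial σ R) :
    pderiv i (pderiv j p) = pderiv j (pderiv i p) := by
  -- a commutator of derivations is a derivation, and this one kills every variable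
  have hcomm : ⁅pderiv (R := R) i, pderiv (R := R) j⁆ = 0 := by
    refine derivation_ext fun k ↦ ?_
    rw [Derivation.commutator_apply]
    classical
    simp [pderiv_X, Pi.single_apply, apply_ite]
  have h := congr($hcomm p)
  rw [Derivation.commutator_apply] at h
  simpa [sub_eq_zero] using h

lemma totalDegree_pderiv_le (i : σ) (p : MvPolynomial σ R) :
    (pderiv i p).totalDegree ≤ p.totalDegree - 1 := by
  refine Finset.sup_le fun m hm ↦ ?_
  have hm' : m + Finsupp.single i 1 ∈ p.support := by
    rw [mem_support_iff, coeff_pderiv] at hm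
    exact mem_support_iff.2 (left_ne_zero_of_mul hm)
  have := le_totalDegree hm'
  change Finsupp.degree (m + Finsupp.single i 1) ≤ _ at this
  change Finsupp.degree m ≤ _
  rw [map_add, Finsupp.degree_single] at this
  omega

end MvPolynomial

section

variable {d : ℕ}

noncomputable def mvLaplacianLinearMap (d : ℕ) : Module.End ℝ (MvPolynomial (Fin d) ℝ) :=
  ∑ i : Fin d, (pderiv i).toLinearMap ^ 2

noncomputable def eulerOpLinearMap (d : ℕ) : Module.End ℝ (MvPolynomial (Fin d) ℝ) :=
  ∑ i : Fin d, LinearMap.mulLeft ℝ (X i) * (pderiv i).toLinearMap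

lemma mvLaplacianLinearMap_apply (p : MvPolynomial (Fin d) ℝ) :
    mvLaplacianLinearMap d p = mvLaplacian p := by
  simp [mvLaplacianLinearMap, mvLaplacian, sq]

lemma eulerOpLinearMap_apply (p : MvPolynomial (Fin d) ℝ) :
    eulerOpLinearMap d p = eulerOp p := by
  simp [eulerOpLinearMap, eulerOp]

lemma totalDegree_mvLaplacian_le (p : MvPolynomial (Fin d) ℝ) :
    (mvLaplacian p).totalDegree ≤ p.totalDegree - 2 :=
  totalDegree_finsetSum_le fun i _ ↦ by
    have h₁ := totalDegree_pderiv_le i (pderiv i p)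
    have h₂ := totalDegree_pderiv_le i p
    omega

lemma mvLaplacian_C (a : ℝ) : mvLaplacian (C a : MvPolynomial (Fin d) ℝ) = 0 := by
  simp [mvLaplacian]

lemma mvLaplacianLinearMap_pow_apply_eq_zero {N : ℕ} {p : MvPolynomial (Fin d) ℝ}
    (hp : p.totalDegree < N) : (mvLaplacianLinearMap d ^ N) p = 0 := by
  induction N generalizing p with
  | zero => omega
  | succ N ih =>
    rw [pow_succ, Module.End.mul_apply, mvLaplacianLinearMap_apply]
    rcases Nat.eq_zero_or_pos p.totalDegree with h₀ | hpos
    · rw [totalDegree_eq_zero_iff_eq_C.1 h₀, mvLaplacian_C, map_zero]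
    · exact ih ((totalDegree_mvLaplacian_le p).trans_lt (by omega))

lemma mvLaplacian_X_mul (i : Fin d) (q : MvPolynomial (Fin d) ℝ) :
    mvLaplacian (X i * q) = 2 • pderiv i q + X i * mvLaplacian q := by
  have h (j : Fin d) : pderiv j (pderiv j (X i * q)) =
      Pi.single i (2 • pderiv i q) j + X i * pderiv j (pderiv j q) := by
    rcases eq_or_ne j i with rfl | hji
    · simp only [pderiv_mul, pderiv_X_self, map_add, one_mul, Pi.single_eq_same, two_smul]
      ring
    · simp [pderiv_X_of_ne hji.symm, hji]
  simp only [mvLaplacian, h, sum_add_distrib, sum_pi_single', mem_univ,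
    if_true, mul_sum]

lemma mvLaplacian_pderiv (i : Fin d) (p : MvPolynomial (Fin d) ℝ) :
    mvLaplacian (pderiv i p) = pderiv i (mvLaplacian p) := by
  simp only [mvLaplacian, map_sum, pderiv_pderiv_comm i]

lemma mvLaplacian_eulerOp (p : MvPolynomial (Fin d) ℝ) :
    mvLaplacian (eulerOp p) = eulerOp (mvLaplacian p) + 2 • mvLaplacian p := by
  calc mvLaplacian (eulerOp p) = ∑ i, mvLaplacian (X i * pderiv i p) := by
        rw [← mvLaplacianLinearMap_apply, eulerOp, map_sum]
        simp only [mvLaplacianLinearMap_apply]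
    _ = ∑ i, (2 • pderiv i (pderiv i p) + X i * pderiv i (mvLaplacian p)) := by
        simp only [mvLaplacian_X_mul, mvLaplacian_pderiv]
    _ = eulerOp (mvLaplacian p) + 2 • mvLaplacian p := by
        rw [sum_add_distrib, ← smul_sum, add_comm, eulerOp, mvLaplacian]

lemma lie_mvLaplacianLinearMap_eulerOpLinearMap :
    ⁅mvLaplacianLinearMap d, eulerOpLinearMap d⁆ = (2 : ℝ) • mvLaplacianLinearMap d := by
  refine LinearMap.ext fun p ↦ ?_
  simp [Ring.lie_def, mvLaplacianLinearMap_apply, eulerOpLinearMap_apply, mvLaplacian_eulerOp,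
    two_smul]

lemma heatOp_eq_truncExp (t : ℝ) (p : MvPolynomial (Fin d) ℝ) :
    heatOp t p = (mvLaplacianLinearMap d).truncExp (t / 2) (p.totalDegree + 1) p := by
  have h : ⇑(mvLaplacianLinearMap d) = mvLaplacian := funext mvLaplacianLinearMap_apply
  simp [heatOp, Module.End.truncExp_apply, Module.End.pow_apply, h]

end

/-- Conjugating the Euler operator by the heat operator yields the number operator:
`e^{-sΔ/2} D e^{sΔ/2} = D - sΔ`. -/
theorem heatOp_conj_euler (d : ℕ) (s : ℝ) (p : MvPolynomial (Fin d) ℝ) :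
    heatOp (-s) (eulerOp (heatOp s p)) = eulerOp p - s • mvLaplacian p := by
  have key := Module.End.truncExp_neg_apply_truncExp_of_lie_eq_smul
    lie_mvLaplacianLinearMap_eulerOpLinearMap (s / 2)
    (mvLaplacianLinearMap_pow_apply_eq_zero p.totalDegree.lt_succ_self)
    (mvLaplacianLinearMap_pow_apply_eq_zero (Nat.lt_succ_self _))
  simpa only [← heatOp_eq_truncExp, eulerOpLinearMap_apply, mvLaplacianLinearMap_apply, ← neg_div,
    mul_div_cancel₀ s two_ne_zero] using key
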